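/- If a directed network contains a negative-cost path between two sinks, then no state x with x_t = 0 at all sinks is admissible. Conversely, if all paths between sinks have nonnegative cost and each node has a path to a sink, the maximal state x̄̄_i = min distance to sinks is a well-defined admissible state with x̄̄_t = 0 at sinks. -/

import Mathlib

def arcCost {V : Type*} (γ : V → V → ℤ) (p : List V) : ℤ :=
  ((p.zip p.tail).map fun q => γ q.1 q.2).sum

def IsWalk {V : Type*} (A : V → V → Prop) (i j : V) (p : List V) : Prop :=
  p.Chain' A ∧ p.head? = some i ∧ p.getLast? = some j

def IsPath {V : Type*} (A : V → V → Prop) (i j : V) (p : List V) : Prop :=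
  IsWalk A i j p ∧ p.Nodup

/-- A directed circuit: a walk of at least one arc whose first and last nodes coincide. -/
def IsCircuit {V : Type*} (A : V → V → Prop) (p : List V) : Prop :=
  p.Chain' A ∧ 2 ≤ p.length ∧ p.head? = p.getLast?

/-!
Summing the admissibility inequalities along a walk gives `x i - x j ≤ arcCost γ p`, so a
negative path between two sinks rules out a state vanishing at the sinks. For the
distance-to-sinks state `d`, an arc `a → b` prefixed to a shortest path `p` from `b` is a walk
from `a`; if it revisits `a`, cutting off the circuit (of positive cost)
leaves a cheaper path from `a`. Either way `d a ≤ γ a b + d b`. At a sink `t`, the trivial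
path gives `d t ≤ 0`, and `d t` is the cost of a path between sinks, so `d t ≥ 0`.
-/

section Network

variable {V : Type*} {A : V → V → Prop} {γ : V → V → ℤ}

@[simp]
lemma arcCost_singleton (a : V) : arcCost γ [a] = 0 := rfl

lemma arcCost_cons_cons (a b : V) (l : List V) :
    arcCost γ (a :: b :: l) = γ a b + arcCost γ (b :: l) := by
  simp [arcCost]

lemma arcCost_append_cons (x : V) (l₂ : List V) :
    ∀ l₁ : List V, arcCost γ (l₁ ++ x :: l₂) = arcCost γ (l₁ ++ [x]) + arcCost γ (x :: l₂)
  | [] => by simp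
  | [a] => by simp [arcCost_cons_cons]
  | a :: c :: l₁ => by
    simp only [List.cons_append, arcCost_cons_cons]
    rw [← List.cons_append, arcCost_append_cons x l₂ (c :: l₁), List.cons_append]
    ring

lemma IsWalk.isChain {i j : V} {p : List V} (hp : IsWalk A i j p) : p.IsChain A := hp.1

lemma isPath_singleton (i : V) : IsPath A i i [i] :=
  ⟨⟨List.isChain_singleton i, rfl, rfl⟩, List.nodup_singleton i⟩

lemma IsWalk.cons {i j a : V} {p : List V} (hp : IsWalk A i j p) (ha : A a i) :
    IsWalk A a j (a :: p) := by
  obtain ⟨hchain, hhead, hlast⟩ := hp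
  obtain ⟨l, rfl⟩ : ∃ l, p = i :: l := List.head?_eq_some_iff.mp hhead
  exact ⟨List.isChain_cons_cons.mpr ⟨ha, hchain⟩, rfl, by rwa [List.getLast?_cons_cons]⟩

lemma IsWalk.arcCost_cons {i j : V} {p : List V} (hp : IsWalk A i j p) (a : V) :
    arcCost γ (a :: p) = γ a i + arcCost γ p := by
  obtain ⟨l, rfl⟩ : ∃ l, p = i :: l := List.head?_eq_some_iff.mp hp.2.1
  exact arcCost_cons_cons a i l

lemma IsWalk.sub_le_arcCost {x : V → ℤ} (hx : ∀ a b, A a b → x a - x b ≤ γ a b) :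
    ∀ {i j : V} {p : List V}, IsWalk A i j p → x i - x j ≤ arcCost γ p
  | _, _, [], ⟨_, hhead, _⟩ => by simp at hhead
  | _, _, [a], ⟨_, hhead, hlast⟩ => by
    simp only [List.head?_cons, List.getLast?_singleton, Option.some.injEq] at hhead hlast
    simp [← hhead, ← hlast]
  | _, j, a :: b :: l, ⟨hchain, hhead, hlast⟩ => by
    simp only [List.head?_cons, Option.some.injEq] at hhead
    subst hhead
    replace hchain : (a :: b :: l).IsChain A := hchain
    rw [List.isChain_cons_cons] at hchain
    have htail : IsWalk A b j (b :: l) :=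
      ⟨hchain.2, rfl, by rwa [List.getLast?_cons_cons] at hlast⟩
    have := hx _ _ hchain.1
    have := htail.sub_le_arcCost hx
    rw [arcCost_cons_cons]
    omega

lemma IsPath.exists_isPath_cons_arcCost_le (hcirc : ∀ c, IsCircuit A c → 0 ≤ arcCost γ c)
    {a b t : V} {p : List V} (hp : IsPath A b t p) (hab : A a b) :
    ∃ q, IsPath A a t q ∧ arcCost γ q ≤ γ a b + arcCost γ p := by
  obtain ⟨hwalk, hnodup⟩ := hp
  rw [← hwalk.arcCost_cons]
  have hwalk' := hwalk.cons hab
  by_cases ha : a ∈ p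
  swap
  · exact ⟨a :: p, ⟨hwalk', List.nodup_cons.mpr ⟨ha, hnodup⟩⟩, le_rfl⟩
  obtain ⟨u, w, rfl⟩ := List.append_of_mem ha
  have hsplit : a :: (u ++ a :: w) = (a :: u) ++ a :: w := rfl
  have hchain := hwalk'.isChain
  rw [hsplit] at hchain
  have hcircuit : IsCircuit A ((a :: u) ++ [a]) := by
    refine ⟨hchain.prefix ⟨w, by simp⟩, by simp, ?_⟩
    rw [List.getLast?_concat]
    rfl
  have hsuffix : IsPath A a t (a :: w) := by
    refine ⟨⟨hchain.suffix (List.suffix_append _ _), rfl, ?_⟩,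
      hnodup.sublist (List.sublist_append_right u _)⟩
    simpa using hwalk.2.2
  refine ⟨a :: w, hsuffix, ?_⟩
  rw [hsplit, arcCost_append_cons]
  linarith [hcirc _ hcircuit]

end Network

/-- if there is a negative-cost path between two sinks then no state
vanishing at the sinks is admissible; conversely, if all paths between sinks have
nonnegative cost, the shortest-distance-to-sink state `d` is admissible and vanishes at
the sinks. -/
theorem sink_paths_and_admissibility {V : Type*} (A : V → V → Prop)
    (γ : V → V → ℤ) (T : Set V)
    (hcirc : ∀ c, IsCircuit A c → 0 < arcCost γ c) :
    ((∃ t ∈ T, ∃ t' ∈ T, ∃ p, IsPath A t t' p ∧ arcCost γ p < 0) →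
      ∀ x : V → ℤ, (∀ t ∈ T, x t = 0) → ¬ ∀ a b, A a b → x a - x b ≤ γ a b) ∧
    ((∀ t ∈ T, ∀ t' ∈ T, ∀ p, IsPath A t t' p → 0 ≤ arcCost γ p) →
      ∀ d : V → ℤ,
        (∀ i, ∃ t ∈ T, ∃ p, IsPath A i t p ∧ arcCost γ p = d i) →
        (∀ i, ∀ t ∈ T, ∀ p, IsPath A i t p → d i ≤ arcCost γ p) →
        (∀ a b, A a b → d a - d b ≤ γ a b) ∧ ∀ t ∈ T, d t = 0) := by
  refine ⟨?_, fun hsinks d hd_attained hd_le => ⟨fun a b hab => ?_, fun t ht => ?_⟩⟩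
  · rintro ⟨t, ht, t', ht', p, hp, hneg⟩ x hx hadm
    have hbound := hp.1.sub_le_arcCost hadm
    rw [hx t ht, hx t' ht'] at hbound
    omega
  · obtain ⟨t, ht, p, hp, hcost⟩ := hd_attained b
    obtain ⟨q, hq, hqcost⟩ :=
      hp.exists_isPath_cons_arcCost_le (fun c hc => (hcirc c hc).le) hab
    have := hd_le a t ht q hq
    omega
  · obtain ⟨t', ht', p, hp, hcost⟩ := hd_attained t
    have hle := hd_le t t ht [t] (isPath_singleton t)
    have hge := hsinks t ht t' ht' p hp
    rw [arcCost_singleton] at hle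
    omega
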